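/- Completeness of AX_det for the class M_det of deterministic causal simulation models: every L-formula true in every deterministic causal simulation model is a theorem of AX_det; equivalently, every AX_det-consistent L-formula is satisfied by some model in M_det. -/

import Mathlib

set_option maxHeartbeats 1000000

namespace CausalSim

/-! ### Propositional syntax -/

/-- Propositional formulas over atoms `X_i`. -/
inductive PropForm : Type
  | atom : ℕ → PropForm
  | neg : PropForm → PropForm
  | and : PropForm → PropForm → PropForm
  | or : PropForm → PropForm → PropForm
  deriving DecidableEq

def PropForm.imp (φ ψ : PropForm) : PropForm := .or (.neg φ) ψ

/-- A fixed propositional contradiction. -/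
def PropForm.bot : PropForm := .and (.atom 0) (.neg (.atom 0))

/-- Its negation, a fixed tautology. -/
def PropForm.top : PropForm := PropForm.neg PropForm.bot

def PropForm.eval (v : ℕ → Bool) : PropForm → Bool
  | .atom i => v i
  | .neg φ => !(φ.eval v)
  | .and φ ψ => φ.eval v && ψ.eval v
  | .or φ ψ => φ.eval v || ψ.eval v

/-- `L_int`: ordered conjunctions of literals over distinct atoms, represented by
the list of literals `(index, polarity)`, with strictly increasing indices.
The empty list represents the empty intervention `⊤`. -/
abbrev Lint : Type := {l : List (ℕ × Bool) // l.Chain' fun p q => p.1 < q.1}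

instance : DecidableEq Lint := fun a b =>
  decidable_of_iff (a.1 = b.1) Subtype.ext_iff.symm

def Lint.top : Lint := ⟨[], List.isChain_nil⟩

/-- The partial assignment (intervention) specified by `α ∈ L_int`. -/
def Lint.itv (α : Lint) : ℕ → Option Bool :=
  fun i => (α.1.find? fun p => p.1 == i).map Prod.snd

def PropForm.lit (p : ℕ × Bool) : PropForm :=
  if p.2 then .atom p.1 else .neg (.atom p.1)

/-- `α ∈ L_int` regarded as a propositional formula (conjunction of its literals;
`⊤` for the empty intervention). -/
def Lint.toProp (α : Lint) : PropForm :=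
  match α.1 with
  | [] => PropForm.top
  | p :: rest => rest.foldl (fun acc q => .and acc (.lit q)) (.lit p)

/-! ### The language `L` -/

/-- The causal simulation language `L`: propositional formulas over the atoms
`X ∪ L_cond`, where a conditional `[α]β` has antecedent `α ∈ L_int` and
consequent `β ∈ L_prop`. -/
inductive LForm : Type
  | atom : ℕ → LForm
  | cond : Lint → PropForm → LForm
  | neg : LForm → LForm
  | and : LForm → LForm → LForm
  | or : LForm → LForm → LForm

def LForm.imp (φ ψ : LForm) : LForm := .or (.neg φ) ψ

def LForm.iff (φ ψ : LForm) : LForm := .and (φ.imp ψ) (ψ.imp φ)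

/-- `⟨α⟩β`, an abbreviation for `¬[α]¬β`. -/
def LForm.dia (α : Lint) (β : PropForm) : LForm := .neg (.cond α (.neg β))

/-- The embedding of `L_prop` into `L`. -/
def PropForm.toL : PropForm → LForm
  | .atom i => .atom i
  | .neg φ => .neg φ.toL
  | .and φ ψ => .and φ.toL ψ.toL
  | .or φ ψ => .or φ.toL ψ.toL

/-- Evaluation of an `L`-formula treating the elements of `X ∪ L_cond` as
propositional atoms: `v` assigns values to the `X`-atoms and `w` to the
conditional atoms. -/
def LForm.evalA (v : ℕ → Bool) (w : Lint → PropForm → Bool) : LForm → Bool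
  | .atom i => v i
  | .cond α β => w α β
  | .neg φ => !(φ.evalA v w)
  | .and φ ψ => φ.evalA v w && ψ.evalA v w
  | .or φ ψ => φ.evalA v w || ψ.evalA v w

/-- Substitution instances of propositional tautologies over the atoms `X ∪ L_cond`. -/
def Tautology (φ : LForm) : Prop := ∀ v w, φ.evalA v w = true

/-! ### Turing machines over a Boolean variable tape, and interventions -/

/-- A transition rule `((q, read), (q', write, moveRight))`. -/
abbrev Rule : Type := (ℕ × Bool) × (ℕ × Bool × Bool)

/-- A (possibly non-deterministic) Turing machine, given by its finite list of
transition rules; the initial control state is `0`, and the machine halts in a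
configuration to which no rule applies. -/
abbrev Machine : Type := List Rule

/-- A configuration: control state, head position, and tape contents. -/
structure Cfg where
  q : ℕ
  pos : ℕ
  tape : ℕ → Bool

/-- The initial tape: the intervention `itv` first sets the intervened variables. -/
def initTape (itv : ℕ → Option Bool) (x : ℕ → Bool) : ℕ → Bool :=
  fun i => (itv i).getD (x i)

/-- Writing under an intervention: writes to intervened variables are ignored. -/
def writeTape (itv : ℕ → Option Bool) (t : ℕ → Bool) (pos : ℕ) (b : Bool) : ℕ → Bool :=
  if itv pos = none then Function.update t pos b else t

def movePos (p : ℕ) (right : Bool) : ℕ := if right then p + 1 else p - 1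

/-- One step of the intervened machine `I_itv(T)`. -/
def MStep (T : Machine) (itv : ℕ → Option Bool) (c c' : Cfg) : Prop :=
  ∃ r ∈ T, r.1 = (c.q, c.tape c.pos) ∧
    c' = ⟨r.2.1, movePos c.pos r.2.2.2, writeTape itv c.tape c.pos r.2.2.1⟩

/-- A halted configuration: no rule applies. -/
def Halted (T : Machine) (c : Cfg) : Prop := ∀ r ∈ T, r.1 ≠ (c.q, c.tape c.pos)

/-- The set of result tapes of halting executions of `I_itv(T)` on input `x`. -/
def Outputs (T : Machine) (itv : ℕ → Option Bool) (x : ℕ → Bool) : Set (ℕ → Bool) :=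
  {y | ∃ c : Cfg, Relation.ReflTransGen (MStep T itv) ⟨0, 0, initTape itv x⟩ c ∧
        Halted T c ∧ c.tape = y}

/-- Deterministic machines: at most one rule per (state, read symbol). -/
def Machine.Det (T : Machine) : Prop := ∀ r₁ ∈ T, ∀ r₂ ∈ T, r₁.1 = r₂.1 → r₁ = r₂

/-- State descriptions have finite support. -/
def FinSupp (x : ℕ → Bool) : Prop := {i | x i = true}.Finite

/-- Machines with at least one halting execution on every input tape under
every intervention. -/
def Machine.TotalHalting (T : Machine) : Prop :=
  ∀ (α : Lint) (x : ℕ → Bool), FinSupp x → (Outputs T α.itv x).Nonempty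

/-- Finite state machines: over all inputs and interventions, the machine reads and
writes only boundedly many tape variables. -/
def Machine.FiniteState (T : Machine) : Prop :=
  ∃ B : ℕ, ∀ (α : Lint) (x : ℕ → Bool), FinSupp x →
    ∀ c : Cfg, Relation.ReflTransGen (MStep T α.itv) ⟨0, 0, initTape α.itv x⟩ c → c.pos < B

/-! ### Causal simulation models and satisfaction -/

/-- A causal simulation model: a machine together with a state description with
finite support. -/
structure CSM where
  T : Machine
  x : ℕ → Bool
  fin : FinSupp x

/-- Satisfaction, generically in the map sending each intervention `α ∈ L_int`
to the set of output tapes of the corresponding halting executions. -/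
def SatGen (O : Lint → Set (ℕ → Bool)) (x : ℕ → Bool) : LForm → Prop
  | .atom i => x i = true
  | .cond α β => ∀ y ∈ O α, β.eval y = true
  | .neg φ => ¬ SatGen O x φ
  | .and φ ψ => SatGen O x φ ∧ SatGen O x ψ
  | .or φ ψ => SatGen O x φ ∨ SatGen O x ψ

/-- `(T, x) ⊨ φ`. -/
def CSM.Sat (M : CSM) (φ : LForm) : Prop :=
  SatGen (fun α => Outputs M.T α.itv M.x) M.x φ

/-- The class `M` of all causal simulation models. -/
def inM (_ : CSM) : Prop := True

/-- The class `M_det`. -/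
def inMdet (M : CSM) : Prop := M.T.Det

/-- The class `M↓`. -/
def inMhalt (M : CSM) : Prop := M.T.TotalHalting

/-- The class `M↓_det`. -/
def inMdethalt (M : CSM) : Prop := M.T.Det ∧ M.T.TotalHalting

/-! ### The axiomatic systems -/

/-- Derivability from: propositional tautologies (over atoms `X ∪ L_cond`),
the axioms `R` and `K`, extra axioms `extra`, modus ponens, and the rule `RW`. -/
inductive Deriv (extra : LForm → Prop) : LForm → Prop
  | taut {φ} : Tautology φ → Deriv extra φ
  | extra {φ} : extra φ → Deriv extra φ
  | axR (α : Lint) : Deriv extra (.cond α α.toProp)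
  | axK (α : Lint) (β γ : PropForm) :
      Deriv extra ((LForm.cond α (β.imp γ)).imp ((LForm.cond α β).imp (.cond α γ)))
  | mp {φ ψ} : Deriv extra (φ.imp ψ) → Deriv extra φ → Deriv extra ψ
  | rw (α : Lint) {β β' : PropForm} :
      Deriv extra (β.imp β').toL → Deriv extra ((LForm.cond α β).imp (.cond α β'))

/-- Instances of axiom `F : ⟨α⟩β → [α]β`. -/
def axF (φ : LForm) : Prop :=
  ∃ (α : Lint) (β : PropForm), φ = (LForm.dia α β).imp (.cond α β)

/-- Instances of axiom `D : [α]β → ⟨α⟩β`. -/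
def axD (φ : LForm) : Prop :=
  ∃ (α : Lint) (β : PropForm), φ = (LForm.cond α β).imp (LForm.dia α β)

def AX : LForm → Prop := Deriv fun _ => False
def AXdet : LForm → Prop := Deriv axF
def AXhalt : LForm → Prop := Deriv axD
def AXdethalt : LForm → Prop := Deriv fun φ => axF φ ∨ axD φ

end CausalSim
namespace CausalSim

/-! ### Normal form clauses and selection functions -/

def bigAndL : List LForm → LForm
  | [] => PropForm.top.toL
  | φ :: rest => rest.foldl .and φ

def bigOrL : List LForm → LForm
  | [] => PropForm.bot.toL
  | φ :: rest => rest.foldl .or φ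

def bigOrP : List PropForm → PropForm
  | [] => PropForm.bot
  | φ :: rest => rest.foldl .or φ

/-- The data of a conjunctive clause
`π ∧ ⋀_{i∈I}([α_i] ⋁_{j∈J_i} β_{i,j}) ∧ ⋀_{k∈K} ⟨α_k⟩ β_k`. -/
structure Clause where
  pi : PropForm
  boxes : List (Lint × List Lint)
  dias : List (Lint × Lint)

/-- The `α_i` (for distinct `i ∈ I`) are pairwise distinct. -/
def Clause.wf (δ : Clause) : Prop := (δ.boxes.map Prod.fst).Pairwise (· ≠ ·)

def Clause.toLForm (δ : Clause) : LForm :=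
  .and δ.pi.toL (.and
    (bigAndL (δ.boxes.map fun p => .cond p.1 (bigOrP (p.2.map Lint.toProp))))
    (bigAndL (δ.dias.map fun p => LForm.dia p.1 p.2.toProp)))

/-- `S_δ`: the antecedents occurring in the clause `δ`. -/
def Clause.ants (δ : Clause) : List Lint := δ.boxes.map Prod.fst ++ δ.dias.map Prod.fst

/-- A list of literals is propositionally consistent. -/
def LitsConsistent (l : List (ℕ × Bool)) : Prop :=
  ∀ i, ¬((i, true) ∈ l ∧ (i, false) ∈ l)

/-- `γ` is the `L_int`-equivalent of the conjunction of the literals `l`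
(reordering and deletion of repeated literals). -/
def Lint.IsEquivOf (γ : Lint) (l : List (ℕ × Bool)) : Prop := γ.1.toFinset = l.toFinset

/-- `f` is a selection function for the clause `δ`. -/
def IsSelection (δ : Clause) (f : Lint → List Lint) : Prop :=
  (∀ α ∈ δ.ants, α ∉ δ.dias.map Prod.fst → f α = []) ∧
  (∀ α ∈ δ.dias.map Prod.fst, ∃ sel : Lint × Lint → Lint,
    f α = (δ.dias.filter fun p => decide (p.1 = α)).map sel ∧
    ∀ p ∈ δ.dias, p.1 = α →
      (∀ J, (α, J) ∈ δ.boxes →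
        ∃ j ∈ J, LitsConsistent (α.1 ++ p.2.1 ++ j.1) ∧
          (sel p).IsEquivOf (α.1 ++ p.2.1 ++ j.1)) ∧
      (α ∉ δ.boxes.map Prod.fst →
        LitsConsistent (α.1 ++ p.2.1) ∧ (sel p).IsEquivOf (α.1 ++ p.2.1)))

/-! ### Sizes -/

def PropForm.size : PropForm → ℕ
  | .atom i => i + 1
  | .neg φ => φ.size + 1
  | .and φ ψ => φ.size + ψ.size + 1
  | .or φ ψ => φ.size + ψ.size + 1

def Lint.size (α : Lint) : ℕ := (α.1.map fun p => p.1 + 1).sum + 1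

/-- `|φ|`, the number of symbols of `φ` (an occurrence of the atom `X_i`
contributing `i + 1` symbols). -/
def LForm.size : LForm → ℕ
  | .atom i => i + 1
  | .cond α β => α.size + β.size + 1
  | .neg φ => φ.size + 1
  | .and φ ψ => φ.size + ψ.size + 1
  | .or φ ψ => φ.size + ψ.size + 1

def PropForm.maxAtom : PropForm → ℕ
  | .atom i => i
  | .neg φ => φ.maxAtom
  | .and φ ψ => max φ.maxAtom ψ.maxAtom
  | .or φ ψ => max φ.maxAtom ψ.maxAtom

def Lint.maxAtom (α : Lint) : ℕ := (α.1.map Prod.fst).foldr max 0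

/-- `N`: the largest index of an atom occurring in `φ`. -/
def LForm.maxAtom : LForm → ℕ
  | .atom i => i
  | .cond α β => max α.maxAtom β.maxAtom
  | .neg φ => φ.maxAtom
  | .and φ ψ => max φ.maxAtom ψ.maxAtom
  | .or φ ψ => max φ.maxAtom ψ.maxAtom

/-- `S_φ`: the antecedents of the conditionals occurring in `φ`. -/
def LForm.ants : LForm → List Lint
  | .atom _ => []
  | .cond α _ => [α]
  | .neg φ => φ.ants
  | .and φ ψ => φ.ants ++ ψ.ants
  | .or φ ψ => φ.ants ++ ψ.ants

/-! ### The programming language `PL` -/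

/-- Assignment statements `X_i := c`, `X_i := X_j`, `X_i := !X_j`. -/
inductive BAssign : Type
  | const (i : ℕ) (c : Bool)
  | copy (i j : ℕ)
  | negcopy (i j : ℕ)
  deriving DecidableEq

def BAssign.target : BAssign → ℕ
  | .const i _ => i
  | .copy i _ => i
  | .negcopy i _ => i

def BAssign.maxVar : BAssign → ℕ
  | .const i _ => i
  | .copy i j => max i j
  | .negcopy i j => max i j

/-- Tests `X_i = c`, `X_i = X_j`, `X_i != X_j`, and conjunctions thereof. -/
inductive BTest : Type
  | eqc (i : ℕ) (c : Bool)
  | eqv (i j : ℕ)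
  | nev (i j : ℕ)
  | and (t₁ t₂ : BTest)
  deriving DecidableEq

def BTest.eval (s : ℕ → Bool) : BTest → Bool
  | .eqc i c => s i == c
  | .eqv i j => s i == s j
  | .nev i j => !(s i == s j)
  | .and t₁ t₂ => t₁.eval s && t₂.eval s

def BTest.size : BTest → ℕ
  | .eqc _ _ => 1
  | .eqv _ _ => 1
  | .nev _ _ => 1
  | .and t₁ t₂ => t₁.size + t₂.size + 1

/-- Programs of `PL`: the empty program, assignments, sequencing,
if-then-else, nondeterministic choice, and the unconditional infinite loop. -/
inductive Prog : Type
  | empty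
  | assign (a : BAssign)
  | seq (p q : Prog)
  | ite (c : BTest) (p q : Prog)
  | choose (ps : List Prog)
  | loop

mutual
  /-- The length of a program. -/
  def Prog.size : Prog → ℕ
    | .empty => 1
    | .assign _ => 1
    | .seq p q => p.size + q.size + 1
    | .ite c p q => c.size + p.size + q.size + 1
    | .choose ps => Prog.sizeList ps + 1
    | .loop => 1
  def Prog.sizeList : List Prog → ℕ
    | [] => 0
    | p :: ps => p.size + Prog.sizeList ps
end

/-- The effect of an assignment under an intervention: writes to intervened
variables are ignored. -/
def applyAssign (itv : ℕ → Option Bool) (a : BAssign) (s : ℕ → Bool) : ℕ → Bool :=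
  let v : Bool := match a with
    | .const _ c => c
    | .copy _ j => s j
    | .negcopy _ j => !(s j)
  if itv a.target = none then Function.update s a.target v else s

/-- Big-step semantics of `PL` under an intervention. A `loop`-statement has no
halting execution, and a `choose`-statement executes one of its branches. -/
inductive BigStep (itv : ℕ → Option Bool) : Prog → (ℕ → Bool) → (ℕ → Bool) → Prop
  | empty (s) : BigStep itv .empty s s
  | assign (a s) : BigStep itv (.assign a) s (applyAssign itv a s)
  | seq {p q s t u} : BigStep itv p s t → BigStep itv q t u → BigStep itv (.seq p q) s u
  | iteT {c p q s t} : c.eval s = true → BigStep itv p s t → BigStep itv (.ite c p q) s t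
  | iteF {c p q s t} : c.eval s = false → BigStep itv q s t → BigStep itv (.ite c p q) s t
  | choose {ps p s t} : p ∈ ps → BigStep itv p s t → BigStep itv (.choose ps) s t

/-- The set of result tapes of halting executions of the intervened program. -/
def ProgOutputs (P : Prog) (itv : ℕ → Option Bool) (x : ℕ → Bool) : Set (ℕ → Bool) :=
  {y | BigStep itv P (initTape itv x) y}

/-- Satisfaction `(T_P, x) ⊨ φ` for the machine compiled from the program `P`
(whose executions are those of `P`). -/
def ProgSat (P : Prog) (x : ℕ → Bool) (φ : LForm) : Prop :=
  SatGen (fun α => ProgOutputs P α.itv x) x φ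

end CausalSim
namespace CausalSim

/-! ### The canonical program fragment `PL†_{φ,C}` -/

def seqList : List Prog → Prog
  | [] => .empty
  | p :: ps => .seq p (seqList ps)

/-- Listing 1: `IsIntervened(X_i)` (with offset parameter `N`): performs the
toggle check for `X_i`, records the result in `X_{i+N}`, uses `X_{i+2N}` as a
temporary variable, and leaves `X_i` unchanged. -/
def isIntervened (N i : ℕ) : Prog :=
  seqList [
    .assign (.copy (i + N) i),
    .assign (.negcopy i i),
    .assign (.copy (i + 2 * N) i),
    .ite (.eqv (i + 2 * N) (i + N))
      (.assign (.const (i + N) true)) (.assign (.const (i + N) false)),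
    .assign (.negcopy i i)]

/-- One copy of `IsIntervened(X_i)` for each `1 ≤ i ≤ N`. -/
def isIntervenedAll (N : ℕ) : Prog :=
  seqList ((List.range' 1 N).map (isIntervened N))

/-- Listing 2: `HoldsFromIntervention(α)`: the condition checking that exactly
the variables occurring in `α` are marked as intervened and carry the values
specified by `α`'s literals. -/
def holdsFromItv (N : ℕ) (α : Lint) : BTest :=
  ((List.range' 1 N).map fun i =>
    match α.itv i with
    | some b => BTest.and (.eqc i b) (.eqc (i + N) true)
    | none => BTest.eqc (i + N) false).foldr .and (.eqv 0 0)

/-- A sequence of assignment statements. -/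
def assignSeq (l : List BAssign) : Prog := seqList (l.map Prog.assign)

/-- An admissible assignment sequence: assignments only to (pairwise distinct)
variables `X_i` with `1 ≤ i ≤ N`, mentioning only variables of index `≤ N`. -/
def GoodAssigns (N : ℕ) (l : List BAssign) : Prop :=
  (l.map BAssign.target).Nodup ∧ ∀ a ∈ l, a.maxVar ≤ N ∧ 1 ≤ a.target

/-- The admissible bodies of the `if`-statements of a fragment program:
(a) a `choose`-statement with at most `C·|φ|` branches, each an admissible
assignment sequence; (b) a single admissible assignment sequence; or
(c) a single `loop`-statement — with (a) excluded for the deterministic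
dialects and (c) excluded for the halting dialects. -/
def IfBody (C N sz : ℕ) (allowChoose allowLoop : Bool) (p : Prog) : Prop :=
  (allowChoose = true ∧ ∃ branches : List (List BAssign),
      p = .choose (branches.map assignSeq) ∧ branches.length ≤ C * sz ∧
      ∀ l ∈ branches, GoodAssigns N l) ∨
  (∃ l : List BAssign, p = assignSeq l ∧ GoodAssigns N l) ∨
  (allowLoop = true ∧ p = .loop)

/-- Membership in the fragment `PL†_{φ,C}`: one copy of `IsIntervened(X_i)` for
each `1 ≤ i ≤ N`, followed by at most one `if`-statement with condition
`HoldsFromIntervention(α)` for each antecedent `α` occurring in `φ`, with an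
admissible body. -/
def InFrag (C : ℕ) (φ : LForm) (allowChoose allowLoop : Bool) (P : Prog) : Prop :=
  ∃ ifs : List (Lint × Prog),
    (ifs.map Prod.fst).Nodup ∧
    (∀ q ∈ ifs, q.1 ∈ φ.ants ∧ IfBody C φ.maxAtom φ.size allowChoose allowLoop q.2) ∧
    P = .seq (isIntervenedAll φ.maxAtom)
      (seqList (ifs.map fun q => Prog.ite (holdsFromItv φ.maxAtom q.1) q.2 .empty))

/-! ### Encodings into binary strings -/

def encNat (n : ℕ) : List Bool := List.replicate n true ++ [false]

def encListGen (enc : α → List Bool) (l : List α) : List Bool :=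
  encNat l.length ++ l.flatMap enc

def encLit (p : ℕ × Bool) : List Bool := encNat p.1 ++ [p.2]

def encLint (α : Lint) : List Bool := encListGen encLit α.1

def encProp : PropForm → List Bool
  | .atom i => encNat 0 ++ encNat i
  | .neg φ => encNat 1 ++ encProp φ
  | .and φ ψ => encNat 2 ++ encProp φ ++ encProp ψ
  | .or φ ψ => encNat 3 ++ encProp φ ++ encProp ψ

/-- A standard encoding of `L`-formulas as binary strings. -/
def encLForm : LForm → List Bool
  | .atom i => encNat 0 ++ encNat i
  | .cond α β => encNat 1 ++ encLint α ++ encProp β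
  | .neg φ => encNat 2 ++ encLForm φ
  | .and φ ψ => encNat 3 ++ encLForm φ ++ encLForm ψ
  | .or φ ψ => encNat 4 ++ encLForm φ ++ encLForm ψ

def encAssign : BAssign → List Bool
  | .const i c => encNat 0 ++ encNat i ++ [c]
  | .copy i j => encNat 1 ++ encNat i ++ encNat j
  | .negcopy i j => encNat 2 ++ encNat i ++ encNat j

def encTest : BTest → List Bool
  | .eqc i c => encNat 0 ++ encNat i ++ [c]
  | .eqv i j => encNat 1 ++ encNat i ++ encNat j
  | .nev i j => encNat 2 ++ encNat i ++ encNat j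
  | .and t₁ t₂ => encNat 3 ++ encTest t₁ ++ encTest t₂

mutual
  /-- A standard encoding of programs as binary strings. -/
  def encProg : Prog → List Bool
    | .empty => encNat 0
    | .assign a => encNat 1 ++ encAssign a
    | .seq p q => encNat 2 ++ encProg p ++ encProg q
    | .ite c p q => encNat 3 ++ encTest c ++ encProg p ++ encProg q
    | .choose ps => encNat 4 ++ encNat ps.length ++ encProgList ps
    | .loop => encNat 5
  def encProgList : List Prog → List Bool
    | [] => []
    | p :: ps => encProg p ++ encProgList ps
end

/-! ### Polynomial time, NP, and NP-completeness -/

/-- The identity finite encoding of binary strings. -/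
def listBoolFinEncoding : Computability.Encoding (List Bool) Bool where
  encode := id
  decode := fun l => some l
  decode_encode := fun _ => rfl

/-- `f` is computable in polynomial time (by a Turing machine). -/
def PolyTimeFun (f : List Bool → List Bool) : Prop :=
  Nonempty (Turing.TM2ComputableInPolyTime listBoolFinEncoding.encode listBoolFinEncoding.encode f)

/-- Polynomial-time many-one reducibility. -/
def PolyReducible (L₁ L₂ : List Bool → Prop) : Prop :=
  ∃ f : List Bool → List Bool, PolyTimeFun f ∧ ∀ s, L₁ s ↔ L₂ (f s)

/-- A self-delimiting pairing of binary strings. -/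
def encPairStr (a b : List Bool) : List Bool := encNat a.length ++ a ++ b

/-- The class NP, via polynomial-time verifiers of polynomial-length certificates. -/
def InNP (L : List Bool → Prop) : Prop :=
  ∃ (V : List Bool → Bool) (p : Polynomial ℕ),
    PolyTimeFun (fun s => [V s]) ∧
    ∀ s, L s ↔ ∃ w : List Bool, w.length ≤ p.eval s.length ∧ V (encPairStr s w) = true

/-- NP-completeness with respect to polynomial-time many-one reductions. -/
def NPComplete (L : List Bool → Prop) : Prop :=
  InNP L ∧ ∀ L' : List Bool → Prop, InNP L' → PolyReducible L' L

/-- The language Sim-Sat for a class of models: encodings of `L`-formulas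
satisfied by some model in the class. -/
def SimSatLang (cls : CSM → Prop) : List Bool → Prop :=
  fun s => ∃ φ : LForm, s = encLForm φ ∧ ∃ M : CSM, cls M ∧ M.Sat φ

/-! ### Miscellaneous helpers -/

/-- The state description with support the list `xs`. -/
def stateOf (xs : List ℕ) : ℕ → Bool := fun i => decide (i ∈ xs)

theorem finSupp_stateOf (xs : List ℕ) : FinSupp (stateOf xs) := by
  apply Set.Finite.subset (List.finite_toSet xs)
  intro i hi
  simpa [stateOf] using hi

/-- The model given by a machine and (the support of) a state description. -/
def csmOf (T : Machine) (xs : List ℕ) : CSM := ⟨T, stateOf xs, finSupp_stateOf xs⟩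

/-- The singleton intervention `X_n := 1`. -/
def lintSingle (n : ℕ) : Lint := ⟨[(n, true)], List.isChain_singleton _⟩

/-- The set `Ω` of the non-compactness proposition, for `f : ℕ → ℕ`. -/
def Omega (f : ℕ → ℕ) : Set LForm :=
  {ψ | ∃ n, ψ = LForm.neg (.atom n)} ∪
  {ψ | ∃ n, ψ = LForm.dia (lintSingle n) (.atom (f n))} ∪
  {ψ | ∃ n m, m ≠ n ∧ m ≠ f n ∧ ψ = LForm.cond (lintSingle n) (.neg (.atom m))}

end CausalSim

namespace CausalSim

/-!
Completeness is proved as model existence for an `AX_det`-consistent formula `ψ`. Reading the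
conditionals of `ψ` as propositional atoms, consistency yields a valuation `(v, w)` of `ψ` that
is moreover coherent at every antecedent `α`: by `F` (with `R`, `K` and `RW`) every pattern of
truth values of the `[α]β` that no single outcome of `α` could produce is refutable. Coherence
means the values are all true (realized by a run that never halts) or are those of one state `y`
satisfying `α`. One deterministic machine realizes all antecedents at once: it finds out which of
`X_0, …, X_N` are intervened on by flipping each and reading it back (writes to intervened
variables are ignored), and then loops or writes the chosen `y`. The truth lemma transfers
`(v, w)` to this model.
-/

open Relation

section Derivations

variable {e : LForm → Prop}

theorem Deriv.of_forall_evalA {Γ : List LForm} {φ : LForm} (hΓ : ∀ χ ∈ Γ, Deriv e χ)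
    (h : ∀ v w, (∀ χ ∈ Γ, χ.evalA v w = true) → φ.evalA v w = true) : Deriv e φ := by
  induction Γ generalizing φ with
  | nil => exact .taut fun v w => h v w (by simp)
  | cons χ Γ ih =>
    refine .mp (ih (fun χ' hχ' => hΓ χ' (List.mem_cons_of_mem _ hχ')) fun v w hvw => ?_)
      (hΓ χ List.mem_cons_self)
    cases hχ : χ.evalA v w
    · simp [LForm.imp, LForm.evalA, hχ]
    · simpa [LForm.imp, LForm.evalA, hχ] using h v w (List.forall_mem_cons.2 ⟨hχ, hvw⟩)

theorem exists_evalA_of_not_deriv_neg {Γ : List LForm} {ψ : LForm} (hψ : ¬Deriv e (.neg ψ))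
    (hΓ : ∀ χ ∈ Γ, Deriv e χ) :
    ∃ v w, ψ.evalA v w = true ∧ ∀ χ ∈ Γ, χ.evalA v w = true := by
  by_contra! h
  refine hψ (Deriv.of_forall_evalA hΓ fun v w hvw => ?_)
  by_contra hψvw
  obtain ⟨χ, hχ, hχvw⟩ := h v w (by simpa [LForm.evalA] using hψvw)
  exact hχvw (hvw χ hχ)

end Derivations

theorem PropForm.evalA_toL (β : PropForm) (v : ℕ → Bool) (w : Lint → PropForm → Bool) :
    β.toL.evalA v w = β.eval v := by
  induction β <;> simp_all [PropForm.toL, LForm.evalA, PropForm.eval]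

theorem PropForm.eval_congr {β : PropForm} {y y' : ℕ → Bool} (h : ∀ i ≤ β.maxAtom, y i = y' i) :
    β.eval y = β.eval y' := by
  induction β with
  | atom i => exact h i le_rfl
  | neg β ih => simp [PropForm.eval, ih h]
  | and β γ ihβ ihγ | or β γ ihβ ihγ =>
    simp only [PropForm.maxAtom] at h
    simp only [PropForm.eval, ihβ fun i hi => h i (le_max_of_le_left hi),
      ihγ fun i hi => h i (le_max_of_le_right hi)]

theorem evalA_bigAndL {l : List LForm} {v : ℕ → Bool} {w : Lint → PropForm → Bool} :
    (bigAndL l).evalA v w = true ↔ ∀ χ ∈ l, χ.evalA v w = true := by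
  have foldl_and (l : List LForm) (acc : LForm) :
      (l.foldl .and acc).evalA v w = true ↔
        acc.evalA v w = true ∧ ∀ χ ∈ l, χ.evalA v w = true := by
    induction l generalizing acc with
    | nil => simp
    | cons χ l ih => simp [ih, LForm.evalA, and_assoc]
  cases l with
  | nil => simp [bigAndL, PropForm.evalA_toL, PropForm.top, PropForm.bot, PropForm.eval]
  | cons χ l => simp [bigAndL, foldl_and]

def LForm.impList (Γ : List LForm) (φ : LForm) : LForm := Γ.foldr .imp φ

theorem LForm.evalA_impList {Γ : List LForm} {φ : LForm} {v : ℕ → Bool}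
    {w : Lint → PropForm → Bool} :
    (LForm.impList Γ φ).evalA v w = true ↔
      ((∀ χ ∈ Γ, χ.evalA v w = true) → φ.evalA v w = true) := by
  induction Γ with
  | nil => simp [LForm.impList]
  | cons χ Γ ih =>
    rw [LForm.impList, List.foldr_cons, ← LForm.impList]
    cases hχ : χ.evalA v w <;> simp [LForm.imp, LForm.evalA, hχ, ih]

def Models (y : ℕ → Bool) (α : Lint) : Prop := ∀ i b, α.itv i = some b → y i = b

theorem Lint.pairwise (α : Lint) : α.1.Pairwise fun p q => p.1 < q.1 :=
  List.isChain_iff_pairwise.1 α.2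

theorem Lint.itv_eq_some_iff {α : Lint} {i : ℕ} {b : Bool} :
    α.itv i = some b ↔ (i, b) ∈ α.1 := by
  simp only [Lint.itv, Option.map_eq_some_iff]
  constructor
  · rintro ⟨p, hp, rfl⟩
    obtain rfl : p.1 = i := by simpa using List.find?_some hp
    exact List.mem_of_find?_eq_some hp
  · intro hib
    obtain ⟨p, hp⟩ : ∃ p, α.1.find? (fun p => p.1 == i) = some p :=
      Option.isSome_iff_exists.1 (List.find?_isSome.2 ⟨(i, b), hib, by simp⟩)
    have hpi : p.1 = i := by simpa using List.find?_some hp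
    have hkeys : (α.1.map Prod.fst).Nodup := α.pairwise.map Prod.fst fun _ _ => ne_of_lt
    refine ⟨p, hp, ?_⟩
    rw [List.inj_on_of_nodup_map hkeys (List.mem_of_find?_eq_some hp) hib hpi]

theorem Lint.itv_eq_none_of_maxAtom_lt {α : Lint} {i : ℕ} (h : α.maxAtom < i) :
    α.itv i = none := by
  refine Option.eq_none_iff_forall_ne_some.2 fun b hb => h.not_ge ?_
  have hmem : i ∈ α.1.map Prod.fst := List.mem_map_of_mem (Lint.itv_eq_some_iff.1 hb)
  unfold Lint.maxAtom
  exact List.le_max_of_le' 0 hmem le_rfl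

theorem Lint.ext_itv {α α' : Lint} (h : ∀ i, α.itv i = α'.itv i) : α = α' := by
  have : Std.Irrefl fun p q : ℕ × Bool => p.1 < q.1 := ⟨fun _ => lt_irrefl _⟩
  have : Std.Antisymm fun p q : ℕ × Bool => p.1 < q.1 := ⟨fun _ _ h h' => (h.asymm h').elim⟩
  exact Subtype.ext <| α.pairwise.eq_of_mem_iff α'.pairwise fun p => by
    rw [← Lint.itv_eq_some_iff, ← Lint.itv_eq_some_iff, h]

theorem Lint.eval_toProp {α : Lint} {y : ℕ → Bool} : α.toProp.eval y = true ↔ Models y α := by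
  have eval_lit (p : ℕ × Bool) : (PropForm.lit p).eval y = true ↔ y p.1 = p.2 := by
    cases hb : p.2 <;> simp [PropForm.lit, hb, PropForm.eval]
  have foldl_lit (l : List (ℕ × Bool)) (acc : PropForm) :
      (l.foldl (fun acc q => acc.and (.lit q)) acc).eval y = true ↔
        acc.eval y = true ∧ ∀ q ∈ l, y q.1 = q.2 := by
    induction l generalizing acc with
    | nil => simp
    | cons q l ih => simp [ih, PropForm.eval, eval_lit, and_assoc]
  have : α.toProp.eval y = true ↔ ∀ p ∈ α.1, y p.1 = p.2 := by
    unfold Lint.toProp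
    split
    · simp_all [PropForm.top, PropForm.bot, PropForm.eval]
    · rename_i hα
      simp only [foldl_lit, eval_lit, hα, List.forall_mem_cons]
  rw [this]
  exact ⟨fun h i b hib => h (i, b) (Lint.itv_eq_some_iff.1 hib),
    fun h p hp => h p.1 p.2 (Lint.itv_eq_some_iff.2 hp)⟩

theorem Deriv.impList_cond_of_entails {e : LForm → Prop} (α : Lint) {L : List PropForm}
    {g : PropForm} (h : ∀ y, Models y α → (∀ ℓ ∈ L, ℓ.eval y = true) → g.eval y = true) :
    Deriv e (LForm.impList (L.map (.cond α)) (.cond α g)) := by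
  induction L generalizing g with
  | nil =>
    refine (Deriv.rw α (.taut fun v w => ?_)).mp (.axR α)
    have := h v
    cases hα : α.toProp.eval v <;>
      simp_all [PropForm.imp, PropForm.toL, LForm.evalA, PropForm.evalA_toL, Lint.eval_toProp]
  | cons ℓ L ih =>
    have hL : Deriv e (LForm.impList (L.map (.cond α)) (.cond α (ℓ.imp g))) :=
      ih fun y hy hL => by
        cases hℓ : ℓ.eval y
        · simp [PropForm.imp, PropForm.eval, hℓ]
        · simp [PropForm.imp, PropForm.eval, h y hy (List.forall_mem_cons.2 ⟨hℓ, hL⟩)]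
    refine Deriv.of_forall_evalA (Γ := [_, _]) (by simpa using ⟨hL, .axK α ℓ g⟩) fun v w hvw => ?_
    simp only [List.mem_cons, List.not_mem_nil, or_false, forall_eq_or_imp, forall_eq,
      LForm.evalA_impList] at hvw
    simp only [List.map_cons, LForm.evalA_impList, List.forall_mem_cons]
    rintro ⟨hℓ, hrest⟩
    have himp := hvw.1 hrest
    have hK := hvw.2
    simp only [LForm.imp, LForm.evalA] at hℓ himp hK ⊢
    simpa [hℓ, himp] using hK

def boxPattern (α : Lint) (B : List PropForm) (s : PropForm → Bool) : LForm :=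
  bigAndL (B.map fun β => bif s β then .cond α β else .neg (.cond α β))

theorem evalA_boxPattern {α : Lint} {B : List PropForm} {s : PropForm → Bool} {v : ℕ → Bool}
    {w : Lint → PropForm → Bool} :
    (boxPattern α B s).evalA v w = true ↔ ∀ β ∈ B, w α β = s β := by
  simp only [boxPattern, evalA_bigAndL, List.forall_mem_map]
  refine forall₂_congr fun β _ => ?_
  cases s β <;> simp [LForm.evalA]

/-- The truth values `s β` of the conditionals `[α]β`, `β ∈ B`, are those of a deterministic
machine under the intervention `α`: either it does not halt, or it halts in a state `y`
that satisfies `α`. -/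
def Coherent (α : Lint) (B : List PropForm) (s : PropForm → Bool) : Prop :=
  (∀ β ∈ B, s β = true) ∨ ∃ y, Models y α ∧ ∀ β ∈ B, s β = β.eval y

theorem coherent_congr {α : Lint} {B : List PropForm} {s s' : PropForm → Bool}
    (h : ∀ β ∈ B, s β = s' β) : Coherent α B s ↔ Coherent α B s' := by
  unfold Coherent
  refine or_congr (forall₂_congr fun β hβ => by rw [h β hβ]) (exists_congr fun y =>
    and_congr_right' (forall₂_congr fun β hβ => by rw [h β hβ]))

/-- Under the pattern, axiom `F` turns each `¬[α]β` into `[α]¬β`. With `R` these box formulas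
that no state satisfying `α` makes true together, so `K` and `RW` give `[α]β₀` for a `β₀` that the
pattern marks false. -/
theorem deriv_neg_boxPattern {α : Lint} {B : List PropForm} {s : PropForm → Bool}
    (hs : ¬Coherent α B s) : Deriv axF (.neg (boxPattern α B s)) := by
  simp only [Coherent, not_or, not_forall, not_exists, not_and] at hs
  obtain ⟨⟨β₀, hβ₀, hsβ₀⟩, hno⟩ := hs
  have hchain : Deriv axF (LForm.impList
      ((B.map fun β => bif s β then β else .neg β).map (.cond α)) (.cond α β₀)) :=
    Deriv.impList_cond_of_entails α fun y hy hL => by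
      obtain ⟨β, hβ, hne⟩ := hno y hy
      have := hL _ (List.mem_map_of_mem hβ)
      cases hsβ : s β <;> simp_all [PropForm.eval]
  refine Deriv.of_forall_evalA
    (Γ := _ :: B.map fun β => (LForm.dia α β).imp (.cond α β))
    (by simpa using ⟨hchain, fun β _ => Deriv.extra ⟨α, β, rfl⟩⟩) fun v w hvw => ?_
  simp only [List.mem_cons, List.mem_map, forall_eq_or_imp, forall_exists_index, and_imp,
    forall_apply_eq_imp_iff₂, LForm.evalA_impList] at hvw
  simp only [LForm.evalA, Bool.not_eq_true', Bool.eq_false_iff, ne_eq, evalA_boxPattern]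
  intro hpat
  have hβ₀box := hvw.1 fun β hβ => by
    have hF := hvw.2 β hβ
    cases hsβ : s β <;> simp_all [LForm.imp, LForm.dia, LForm.evalA]
  simp_all [LForm.evalA]

def LForm.conds : LForm → List (Lint × PropForm)
  | .atom _ => []
  | .cond α β => [(α, β)]
  | .neg φ => φ.conds
  | .and φ ψ => φ.conds ++ ψ.conds
  | .or φ ψ => φ.conds ++ ψ.conds

def LForm.consequents (φ : LForm) (α : Lint) : List PropForm :=
  (φ.conds.filter fun p => p.1 = α).map Prod.snd

@[simp]
theorem LForm.mem_consequents {φ : LForm} {α : Lint} {β : PropForm} :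
    β ∈ φ.consequents α ↔ (α, β) ∈ φ.conds := by
  simp [LForm.consequents]

/-- The negations of the finitely many incoherent box patterns of `ψ` are theorems, so some
valuation satisfies `ψ` together with all of them. -/
theorem exists_coherent_of_not_deriv_neg {ψ : LForm} (hψ : ¬Deriv axF (.neg ψ)) :
    ∃ v w, ψ.evalA v w = true ∧ ∀ p ∈ ψ.conds, Coherent p.1 (ψ.consequents p.1) (w p.1) := by
  classical
  obtain ⟨v, w, hψvw, hΓ⟩ := exists_evalA_of_not_deriv_neg hψ
    (Γ := ψ.conds.flatMap fun p => ((ψ.consequents p.1).sublists.filter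
      fun S => ¬Coherent p.1 (ψ.consequents p.1) (· ∈ S)).map
        fun S => .neg (boxPattern p.1 (ψ.consequents p.1) (· ∈ S)))
    (by
      simp only [List.mem_flatMap, List.mem_map, List.mem_filter, decide_eq_true_eq]
      rintro _ ⟨p, -, S, ⟨-, hS⟩, rfl⟩
      exact deriv_neg_boxPattern hS)
  refine ⟨v, w, hψvw, fun p hp => ?_⟩
  set B := ψ.consequents p.1
  have hS : ∀ β ∈ B, w p.1 β = decide (β ∈ B.filter (w p.1)) := by
    intro β hβ
    simp [hβ]
  rw [coherent_congr hS]
  by_contra hinc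
  have := hΓ (.neg (boxPattern p.1 B (· ∈ B.filter (w p.1))))
    (List.mem_flatMap.2 ⟨p, hp, List.mem_map.2 ⟨_, List.mem_filter.2
      ⟨List.mem_sublists.2 List.filter_sublist, decide_eq_true hinc⟩, rfl⟩⟩)
  rw [LForm.evalA, evalA_boxPattern.2 hS] at this
  simp at this

theorem LForm.maxAtom_le_of_mem_conds {φ : LForm} {p : Lint × PropForm} (h : p ∈ φ.conds) :
    p.1.maxAtom ≤ φ.maxAtom ∧ p.2.maxAtom ≤ φ.maxAtom := by
  induction φ with
  | atom => cases h
  | cond α β => simp_all [LForm.conds, LForm.maxAtom]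
  | neg φ ih => exact ih h
  | and φ ψ ihφ ihψ | or φ ψ ihφ ihψ =>
    simp only [LForm.conds, List.mem_append] at h
    rcases h with h | h
    · exact (ihφ h).imp (le_max_of_le_left ·) (le_max_of_le_left ·)
    · exact (ihψ h).imp (le_max_of_le_right ·) (le_max_of_le_right ·)

theorem satGen_iff_evalA {O : Lint → Set (ℕ → Bool)} {x v : ℕ → Bool}
    {w : Lint → PropForm → Bool} {φ : LForm} (hx : ∀ i ≤ φ.maxAtom, x i = v i)
    (hO : ∀ p ∈ φ.conds, (∀ y ∈ O p.1, p.2.eval y = true) ↔ w p.1 p.2 = true) :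
    SatGen O x φ ↔ φ.evalA v w = true := by
  induction φ with
  | atom i => simp [SatGen, LForm.evalA, hx i le_rfl]
  | cond α β => exact hO (α, β) (by simp [LForm.conds])
  | neg φ ih => simp [SatGen, LForm.evalA, ih hx hO]
  | and φ ψ ihφ ihψ | or φ ψ ihφ ihψ =>
    simp only [LForm.conds, List.mem_append] at hO
    simp only [SatGen, LForm.evalA, Bool.and_eq_true, Bool.or_eq_true,
      ihφ (fun i hi => hx i (le_max_of_le_left hi)) fun p hp => hO p (.inl hp),
      ihψ (fun i hi => hx i (le_max_of_le_right hi)) fun p hp => hO p (.inr hp)]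

open Classical in
noncomputable def witness (α : Lint) (B : List PropForm) (s : PropForm → Bool) :
    Option (ℕ → Bool) :=
  if h : ∃ y, Models y α ∧ ∀ β ∈ B, s β = β.eval y then some h.choose else none

theorem models_of_mem_witness {α : Lint} {B : List PropForm} {s : PropForm → Bool}
    {y : ℕ → Bool} (hy : y ∈ witness α B s) : Models y α := by
  unfold witness at hy
  split_ifs at hy with h
  · exact Option.some_inj.1 hy ▸ h.choose_spec.1
  · cases hy

theorem Coherent.forall_mem_witness_iff {α : Lint} {B : List PropForm} {s : PropForm → Bool}
    {β : PropForm} (hs : Coherent α B s) (hβ : β ∈ B) :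
    (∀ y ∈ witness α B s, β.eval y = true) ↔ s β = true := by
  unfold witness
  split_ifs with h
  · simp [h.choose_spec.2 β hβ]
  · simp [hs.resolve_right h β hβ]

section Deterministic

variable {T : Machine} {itv : ℕ → Option Bool}

theorem Machine.Det.mstep_unique (hT : T.Det) {c c₁ c₂ : Cfg} (h₁ : MStep T itv c c₁)
    (h₂ : MStep T itv c c₂) : c₁ = c₂ := by
  obtain ⟨r₁, hr₁, hk₁, rfl⟩ := h₁
  obtain ⟨r₂, hr₂, hk₂, rfl⟩ := h₂
  rw [hT r₁ hr₁ r₂ hr₂ (hk₁.trans hk₂.symm)]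

theorem not_halted_of_mstep {c c' : Cfg} (h : MStep T itv c c') : ¬Halted T c := by
  obtain ⟨r, hr, hk, -⟩ := h
  exact fun hc => hc r hr hk

theorem Machine.Det.reflTransGen_of_halted (hT : T.Det) {a b c : Cfg}
    (hb : ReflTransGen (MStep T itv) a b) (hc : ReflTransGen (MStep T itv) a c)
    (hhalt : Halted T c) : ReflTransGen (MStep T itv) b c := by
  induction hb with
  | refl => exact hc
  | tail _ hstep ih =>
    rcases ih.cases_head with rfl | ⟨d, hd, hdc⟩
    · exact absurd hhalt (not_halted_of_mstep hstep)
    · exact hT.mstep_unique hstep hd ▸ hdc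

theorem Machine.Det.outputs_eq_singleton (hT : T.Det) {x : ℕ → Bool} {c : Cfg}
    (hc : ReflTransGen (MStep T itv) ⟨0, 0, initTape itv x⟩ c) (hhalt : Halted T c) :
    Outputs T itv x = {c.tape} := by
  ext y
  constructor
  · rintro ⟨c', hc', hhalt', rfl⟩
    rcases (hT.reflTransGen_of_halted hc hc' hhalt').cases_head with rfl | ⟨d, hd, -⟩
    · rfl
    · exact absurd hhalt (not_halted_of_mstep hd)
  · rintro rfl
    exact ⟨c, hc, hhalt, rfl⟩

theorem Machine.Det.outputs_eq_empty (hT : T.Det) {x : ℕ → Bool} {c₀ : Cfg}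
    (hc₀ : ReflTransGen (MStep T itv) ⟨0, 0, initTape itv x⟩ c₀)
    (hrun : ∀ c, ReflTransGen (MStep T itv) c₀ c → ¬Halted T c) :
    Outputs T itv x = ∅ :=
  Set.eq_empty_of_forall_notMem fun _ ⟨c, hc, hhalt, _⟩ =>
    hrun c (hT.reflTransGen_of_halted hc₀ hc hhalt) hhalt

end Deterministic

section FiniteControl

variable {σ : Type*} [Encodable σ] (s₀ : σ)

/-- Machines start in control state `0`; the swap gives that number to `s₀`. -/
def stateIndex (s : σ) : ℕ := Equiv.swap 0 (Encodable.encode s₀) (Encodable.encode s)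

theorem stateIndex_injective : Function.Injective (stateIndex s₀) :=
  (Equiv.injective _).comp Encodable.encode_injective

theorem stateIndex_self : stateIndex s₀ s₀ = 0 := Equiv.swap_apply_right _ _

variable (Q : List σ) (δ : σ → Bool → Option (σ × Bool × Bool))

/-- Only the states in `Q` get rules, which keeps the machine finite. -/
def Machine.ofTransition : Machine :=
  Q.flatMap fun s => [false, true].filterMap fun b =>
    (δ s b).map fun v => ((stateIndex s₀ s, b), (stateIndex s₀ v.1, v.2.1, v.2.2))

variable {s₀ Q δ}

theorem mem_ofTransition {r : Rule} : r ∈ Machine.ofTransition s₀ Q δ ↔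
    ∃ s ∈ Q, ∃ b v, δ s b = some v ∧
      r = ((stateIndex s₀ s, b), (stateIndex s₀ v.1, v.2.1, v.2.2)) := by
  simp only [Machine.ofTransition, List.mem_flatMap, List.mem_filterMap, Option.map_eq_some_iff]
  refine exists_congr fun s => and_congr_right fun _ => ⟨?_, ?_⟩
  · rintro ⟨b, -, v, hv, rfl⟩
    exact ⟨b, v, hv, rfl⟩
  · rintro ⟨b, v, hv, rfl⟩
    exact ⟨b, by cases b <;> simp, v, hv, rfl⟩

theorem ofTransition_det : (Machine.ofTransition s₀ Q δ).Det := by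
  intro r₁ h₁ r₂ h₂ hkey
  obtain ⟨s₁, -, b₁, v₁, hv₁, rfl⟩ := mem_ofTransition.1 h₁
  obtain ⟨s₂, -, b₂, v₂, hv₂, rfl⟩ := mem_ofTransition.1 h₂
  simp only [Prod.mk.injEq] at hkey
  obtain rfl := stateIndex_injective s₀ hkey.1
  obtain rfl := hkey.2
  obtain rfl := Option.some_inj.1 (hv₁.symm.trans hv₂)
  rfl

theorem mstep_ofTransition {itv : ℕ → Option Bool} {s s' : σ} (hs : s ∈ Q) {p : ℕ}
    {t : ℕ → Bool} {b d : Bool} {c : Cfg} (h : δ s (t p) = some (s', b, d))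
    (hc : c = ⟨stateIndex s₀ s', movePos p d, writeTape itv t p b⟩) :
    MStep (Machine.ofTransition s₀ Q δ) itv ⟨stateIndex s₀ s, p, t⟩ c :=
  ⟨_, mem_ofTransition.2 ⟨s, hs, _, _, h, rfl⟩, rfl, hc⟩

theorem exists_of_mstep_ofTransition {itv : ℕ → Option Bool} {s : σ} {p : ℕ} {t : ℕ → Bool}
    {c : Cfg} (h : MStep (Machine.ofTransition s₀ Q δ) itv ⟨stateIndex s₀ s, p, t⟩ c) :
    ∃ s' b d, δ s (t p) = some (s', b, d) ∧
      c = ⟨stateIndex s₀ s', movePos p d, writeTape itv t p b⟩ := by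
  obtain ⟨r, hr, hkey, rfl⟩ := h
  obtain ⟨s', -, b, v, hv, rfl⟩ := mem_ofTransition.1 hr
  simp only [Prod.mk.injEq] at hkey
  obtain rfl := stateIndex_injective s₀ hkey.1
  exact ⟨v.1, v.2.1, v.2.2, hkey.2 ▸ hv, rfl⟩

theorem halted_ofTransition {s : σ} {p : ℕ} {t : ℕ → Bool} (h : δ s (t p) = none) :
    Halted (Machine.ofTransition s₀ Q δ) ⟨stateIndex s₀ s, p, t⟩ := by
  intro r hr hkey
  obtain ⟨s', -, b, v, hv, rfl⟩ := mem_ofTransition.1 hr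
  simp only [Prod.mk.injEq] at hkey
  obtain rfl := stateIndex_injective s₀ hkey.1
  simp [← hkey.2, hv] at h

end FiniteControl

theorem writeTape_apply {itv : ℕ → Option Bool} {t : ℕ → Bool} {p : ℕ} {b : Bool} {i : ℕ} :
    writeTape itv t p b i = if i = p ∧ itv i = none then b else t i := by
  unfold writeTape
  by_cases hi : i = p
  · subst hi
    split_ifs <;> simp_all
  · split_ifs <;> simp_all

theorem writeTape_self {itv : ℕ → Option Bool} {t : ℕ → Bool} {p : ℕ} :
    writeTape itv t p (t p) = t := by
  ext i
  rw [writeTape_apply]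
  split_ifs with h
  · rw [h.1]
  · rfl

/-- Flipping `X_i` and reading it back reveals `itv i`; flipping the value read restores the
tape. -/
theorem writeTape_toggle {itv : ℕ → Option Bool} {t : ℕ → Bool} {i : ℕ}
    (ht : ∀ b, itv i = some b → t i = b) :
    (if writeTape itv t i (!t i) i = t i then some (t i) else none) = itv i ∧
      writeTape itv (writeTape itv t i (!t i)) i (!writeTape itv t i (!t i) i) = t := by
  rcases h : itv i with _ | b
  · simp [writeTape, h]
  · simp [writeTape, h, ht b h]

def readings (itv : ℕ → Option Bool) : ℕ → List (Option Bool)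
  | 0 => []
  | i + 1 => itv i :: readings itv i

theorem length_readings (itv : ℕ → Option Bool) (n : ℕ) : (readings itv n).length = n := by
  induction n <;> simp_all [readings]

theorem eq_of_readings_eq {itv itv' : ℕ → Option Bool} {n i : ℕ}
    (h : readings itv n = readings itv' n) (hi : i < n) : itv i = itv' i := by
  induction n with
  | zero => omega
  | succ n ih =>
    simp only [readings, List.cons.injEq] at h
    rcases Nat.lt_succ_iff_lt_or_eq.1 hi with hi | rfl
    · exact ih h.2 hi
    · exact h.1

def optBoolLists : ℕ → List (List (Option Bool))
  | 0 => [[]]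
  | n + 1 => (optBoolLists n).flatMap fun rs => [none, some false, some true].map (· :: rs)

theorem mem_optBoolLists (rs : List (Option Bool)) : rs ∈ optBoolLists rs.length := by
  induction rs with
  | nil => simp [optBoolLists]
  | cons r rs ih =>
    simp only [optBoolLists, List.length_cons, List.mem_flatMap]
    exact ⟨rs, ih, by rcases r with _ | _ | _ <;> simp⟩

/-- Control states of the detector: probing `X_i` takes the three states `flip`, `back` and
`test`, with `rs` the readings so far; `write rs j` writes the output tape from `X_j` down. -/
inductive DetectorState : Type
  | flip (i : ℕ) (rs : List (Option Bool))
  | back (i : ℕ) (rs : List (Option Bool)) (t : Bool)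
  | test (i : ℕ) (rs : List (Option Bool)) (t : Bool)
  | write (rs : List (Option Bool)) (j : ℕ)
  | loop
  | halt
  deriving Encodable

namespace DetectorState

variable (N : ℕ) (out : List (Option Bool) → Option (ℕ → Bool))

def afterScan (rs : List (Option Bool)) : DetectorState :=
  if (out rs).isSome then write rs (N + 1) else loop

def step : DetectorState → Bool → Option (DetectorState × Bool × Bool)
  | flip i rs, t => some (back i rs t, !t, true)
  | back i rs t, t' => some (test i rs t, t', false)
  | test i rs t, t' =>
    let rs' := (if t' = t then some t else none) :: rs
    some (if i < N then flip (i + 1) rs' else afterScan N out rs', !t', true)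
  | write rs j, _ =>
    some (if j = 0 then halt else write rs (j - 1), (out rs).getD (fun _ => false) j, false)
  | loop, t => some (loop, t, false)
  | halt, _ => none

def states : List DetectorState :=
  loop :: (List.range (N + 2)).flatMap fun i => (List.range (N + 2)).flatMap fun n =>
    (optBoolLists n).flatMap fun rs =>
      [flip i rs, back i rs false, back i rs true, test i rs false, test i rs true, write rs i]

variable {N}

theorem loop_mem_states : loop ∈ states N := List.mem_cons_self

theorem mem_states {i : ℕ} {rs : List (Option Bool)} (hi : i ≤ N + 1)
    (hrs : rs.length ≤ N + 1) (t : Bool) {s : DetectorState}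
    (hs : s ∈ [flip i rs, back i rs t, test i rs t, write rs i]) : s ∈ states N := by
  refine List.mem_cons_of_mem _ (List.mem_flatMap.2 ⟨i, by simp; omega,
    List.mem_flatMap.2 ⟨rs.length, by simp; omega,
      List.mem_flatMap.2 ⟨rs, mem_optBoolLists rs, ?_⟩⟩⟩)
  simp only [List.mem_cons, List.not_mem_nil, or_false] at hs
  cases t <;> rcases hs with rfl | rfl | rfl | rfl <;> simp

end DetectorState

open DetectorState

/-- Reads off the intervention on `X_0, …, X_N` by toggling each variable, then loops if `out` of
the readings is `none`, and writes `y` onto `X_0, …, X_{N+1}` and halts if it is `some y`. -/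
def detector (N : ℕ) (out : List (Option Bool) → Option (ℕ → Bool)) : Machine :=
  Machine.ofTransition (flip 0 []) (states N) (step N out)

abbrev detectorCfg (s : DetectorState) (p : ℕ) (t : ℕ → Bool) : Cfg :=
  ⟨stateIndex (flip 0 []) s, p, t⟩

section DetectorRun

variable {N : ℕ} {out : List (Option Bool) → Option (ℕ → Bool)} {itv : ℕ → Option Bool}

theorem detector_probe {t : ℕ → Bool} {i : ℕ} (hi : i ≤ N) {rs : List (Option Bool)}
    (hrs : rs.length ≤ N) (ht : ∀ b, itv i = some b → t i = b) :
    ReflTransGen (MStep (detector N out) itv) (detectorCfg (flip i rs) i t)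
      (detectorCfg (if i < N then flip (i + 1) (itv i :: rs)
        else afterScan N out (itv i :: rs)) (i + 1) t) := by
  obtain ⟨hread, hrestore⟩ := writeTape_toggle ht
  have hmem : ∀ s ∈ [flip i rs, back i rs (t i), test i rs (t i), write rs i], s ∈ states N :=
    fun s hs => mem_states (by omega) (by omega) (t i) hs
  have s₁ : MStep (detector N out) itv (detectorCfg (flip i rs) i t)
      (detectorCfg (back i rs (t i)) (i + 1) (writeTape itv t i (!t i))) :=
    mstep_ofTransition (hmem (flip i rs) (by simp)) rfl rfl
  have s₂ : MStep (detector N out) itv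
      (detectorCfg (back i rs (t i)) (i + 1) (writeTape itv t i (!t i)))
      (detectorCfg (test i rs (t i)) i (writeTape itv t i (!t i))) :=
    mstep_ofTransition (hmem (back i rs (t i)) (by simp)) rfl (by simp [movePos, writeTape_self])
  have s₃ : MStep (detector N out) itv
      (detectorCfg (test i rs (t i)) i (writeTape itv t i (!t i)))
      (detectorCfg (if i < N then flip (i + 1) (itv i :: rs)
        else afterScan N out (itv i :: rs)) (i + 1) t) :=
    mstep_ofTransition (hmem (test i rs (t i)) (by simp)) (by simp only [step, hread]; rfl)
      (by simp [movePos, hrestore])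
  exact .head s₁ (.head s₂ (.single s₃))

theorem detector_scan {t : ℕ → Bool} (ht : ∀ i b, itv i = some b → t i = b) :
    ReflTransGen (MStep (detector N out) itv) (detectorCfg (flip 0 []) 0 t)
      (detectorCfg (afterScan N out (readings itv (N + 1))) (N + 1) t) := by
  have hflip : ∀ i ≤ N, ReflTransGen (MStep (detector N out) itv)
      (detectorCfg (flip 0 []) 0 t) (detectorCfg (flip i (readings itv i)) i t) := by
    intro i hi
    induction i with
    | zero => exact .refl
    | succ i ih =>
      have := detector_probe (N := N) (out := out) (i := i) (rs := readings itv i) (by omega)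
        (by simp [length_readings]; omega) (ht i)
      rw [if_pos (by omega)] at this
      exact (ih (by omega)).trans this
  have := detector_probe (N := N) (out := out) (rs := readings itv N) le_rfl
    (by simp [length_readings]) (ht N)
  rw [if_neg (lt_irrefl N)] at this
  exact (hflip N le_rfl).trans this

theorem detector_write {rs : List (Option Bool)} (hrs : rs.length ≤ N + 1) {j : ℕ}
    (hj : j ≤ N + 1) (t : ℕ → Bool) :
    ∃ t', ReflTransGen (MStep (detector N out) itv) (detectorCfg (write rs j) j t)
      (detectorCfg halt 0 t') ∧
      ∀ i, t' i = if i ≤ j ∧ itv i = none then (out rs).getD (fun _ => false) i else t i := by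
  induction j generalizing t with
  | zero =>
    have hstep : MStep (detector N out) itv (detectorCfg (write rs 0) 0 t)
        (detectorCfg halt 0 (writeTape itv t 0 ((out rs).getD (fun _ => false) 0))) :=
      mstep_ofTransition (mem_states hj hrs false (by simp)) rfl rfl
    refine ⟨_, .single hstep, fun i => ?_⟩
    rw [writeTape_apply]
    by_cases hi : i = 0 <;> simp [hi]
  | succ j ih =>
    obtain ⟨t', hrun, ht'⟩ := ih (by omega) (writeTape itv t (j + 1) ((out rs).getD _ (j + 1)))
    have hstep : MStep (detector N out) itv (detectorCfg (write rs (j + 1)) (j + 1) t)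
        (detectorCfg (write rs j) j
          (writeTape itv t (j + 1) ((out rs).getD (fun _ => false) (j + 1)))) :=
      mstep_ofTransition (mem_states hj hrs false (by simp)) rfl rfl
    refine ⟨t', .head hstep hrun, fun i => ?_⟩
    rw [ht', writeTape_apply]
    by_cases hi : i = j + 1
    · subst hi; simp
    · by_cases hij : i ≤ j
      · simp [hi, hij, show i ≤ j + 1 by omega]
      · simp [hi, hij, show ¬i ≤ j + 1 by omega]

end DetectorRun

section DetectorOutputs

variable {N : ℕ} {out : List (Option Bool) → Option (ℕ → Bool)} {itv : ℕ → Option Bool}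
  {x : ℕ → Bool}

theorem detector_scan_initTape :
    ReflTransGen (MStep (detector N out) itv) ⟨0, 0, initTape itv x⟩
      (detectorCfg (afterScan N out (readings itv (N + 1))) (N + 1) (initTape itv x)) := by
  rw [← stateIndex_self (flip 0 [])]
  exact detector_scan fun i b h => by simp [initTape, h]

theorem outputs_detector_of_eq_none (h : out (readings itv (N + 1)) = none) :
    Outputs (detector N out) itv x = ∅ := by
  have hloop := detector_scan_initTape (N := N) (out := out) (itv := itv) (x := x)
  simp only [afterScan, h, Option.isSome_none, Bool.false_eq_true, if_false] at hloop
  refine ofTransition_det.outputs_eq_empty hloop fun c hc => ?_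
  obtain ⟨p, t, rfl⟩ : ∃ p t, c = detectorCfg loop p t := by
    induction hc with
    | refl => exact ⟨_, _, rfl⟩
    | tail _ hstep ih =>
      obtain ⟨p, t, rfl⟩ := ih
      obtain ⟨s', b, d, hδ, rfl⟩ := exists_of_mstep_ofTransition hstep
      obtain ⟨rfl, -, -⟩ : s' = loop ∧ b = t p ∧ d = false := by simpa [step, eq_comm] using hδ
      exact ⟨_, _, rfl⟩
  exact not_halted_of_mstep (itv := itv) (mstep_ofTransition loop_mem_states rfl rfl)

theorem outputs_detector_of_eq_some {y : ℕ → Bool} (h : out (readings itv (N + 1)) = some y) :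
    ∃ y', Outputs (detector N out) itv x = {y'} ∧ ∀ i ≤ N, y' i = (itv i).getD (y i) := by
  have hwrite := detector_scan_initTape (N := N) (out := out) (itv := itv) (x := x)
  simp only [afterScan, h, Option.isSome_some, if_true] at hwrite
  obtain ⟨y', hrun, hy'⟩ := detector_write (N := N) (out := out) (itv := itv)
    (rs := readings itv (N + 1)) (by simp [length_readings]) le_rfl (initTape itv x)
  refine ⟨y', ofTransition_det.outputs_eq_singleton (hwrite.trans hrun)
    (halted_ofTransition rfl), fun i hi => ?_⟩
  rw [hy', h]
  rcases hb : itv i with _ | b <;> simp [initTape, hb, show i ≤ N + 1 by omega]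

end DetectorOutputs

open Classical in
/-- Well defined on the readings of interventions on `X_0, …, X_N`, since these determine the
intervention (`tableOf_readings`). -/
noncomputable def tableOf (N : ℕ) (o : Lint → Option (ℕ → Bool)) (rs : List (Option Bool)) :
    Option (ℕ → Bool) :=
  if h : ∃ α : Lint, α.maxAtom ≤ N ∧ readings α.itv (N + 1) = rs then o h.choose else none

theorem tableOf_readings {N : ℕ} {o : Lint → Option (ℕ → Bool)} {α : Lint}
    (hα : α.maxAtom ≤ N) : tableOf N o (readings α.itv (N + 1)) = o α := by
  have h : ∃ α' : Lint, α'.maxAtom ≤ N ∧ readings α'.itv (N + 1) = readings α.itv (N + 1) :=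
    ⟨α, hα, rfl⟩
  rw [tableOf, dif_pos h]
  congr
  refine Lint.ext_itv fun i => ?_
  by_cases hi : i ≤ N
  · exact eq_of_readings_eq h.choose_spec.2 (by omega)
  · rw [Lint.itv_eq_none_of_maxAtom_lt (by have := h.choose_spec.1; omega),
      Lint.itv_eq_none_of_maxAtom_lt (by omega)]

theorem detector_forall_outputs_iff {N : ℕ} {o : Lint → Option (ℕ → Bool)}
    (ho : ∀ α, ∀ y ∈ o α, Models y α) {α : Lint} (hα : α.maxAtom ≤ N) {β : PropForm}
    (hβ : β.maxAtom ≤ N) (x : ℕ → Bool) :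
    (∀ y ∈ Outputs (detector N (tableOf N o)) α.itv x, β.eval y = true) ↔
      ∀ y ∈ o α, β.eval y = true := by
  rcases hoα : o α with _ | y
  · simp [outputs_detector_of_eq_none ((tableOf_readings hα).trans hoα)]
  · obtain ⟨y', hout, hy'⟩ := outputs_detector_of_eq_some (x := x)
      ((tableOf_readings hα).trans hoα)
    have hy := ho α y (hoα ▸ rfl)
    suffices β.eval y' = β.eval y by simp [hout, this]
    refine PropForm.eval_congr fun i hi => ?_
    rw [hy' i (hi.trans hβ)]
    rcases h : α.itv i with _ | b
    · rfl
    · exact (hy i b h).symm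

theorem exists_det_model_of_not_deriv_neg {ψ : LForm} (hψ : ¬Deriv axF (.neg ψ)) :
    ∃ M : CSM, inMdet M ∧ M.Sat ψ := by
  obtain ⟨v, w, hψvw, hcoh⟩ := exists_coherent_of_not_deriv_neg hψ
  let x i := decide (i ≤ ψ.maxAtom) && v i
  have hx : FinSupp x := (Set.finite_Iic ψ.maxAtom).subset fun i hi => by simp_all [x]
  let M : CSM :=
    ⟨detector ψ.maxAtom (tableOf ψ.maxAtom fun α => witness α (ψ.consequents α) (w α)), x, hx⟩
  refine ⟨M, ofTransition_det,
    (satGen_iff_evalA (fun i hi => by simp [M, x, hi]) fun p hp => ?_).2 hψvw⟩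
  obtain ⟨hα, hβ⟩ := LForm.maxAtom_le_of_mem_conds hp
  rw [detector_forall_outputs_iff (fun _ _ => models_of_mem_witness) hα hβ]
  exact (hcoh p hp).forall_mem_witness_iff (LForm.mem_consequents.2 hp)

/-- Completeness of `AX_det` for the class `M_det`: every
`L`-formula true in every deterministic model is a theorem of `AX_det`;
equivalently, every `AX_det`-consistent formula is satisfied by some model
in `M_det`. -/
theorem AXdet_complete :
    (∀ φ : LForm, (∀ M : CSM, inMdet M → M.Sat φ) → AXdet φ) ∧
    (∀ φ : LForm, ¬ AXdet (.neg φ) → ∃ M : CSM, inMdet M ∧ M.Sat φ) := by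
  refine ⟨fun φ hφ => ?_, fun φ => exists_det_model_of_not_deriv_neg⟩
  by_contra hφ'
  have hcons : ¬Deriv axF (.neg (.neg φ)) := fun h =>
    hφ' (Deriv.of_forall_evalA (Γ := [_]) (by simpa using h) fun v w => by simp [LForm.evalA])
  obtain ⟨M, hM, hsat⟩ := exists_det_model_of_not_deriv_neg hcons
  exact hsat (hφ M hM)

end CausalSim
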